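/- (Lemma: C versus Δ, general case) Let c : ℤ → R with c 0 = 1, c n = 0 for n < 0, and let f be a Laurent polynomial in u₁,...,u_r. Then applying the C-operation (u₁^{λ₁}···u_r^{λ_r} ↦ ∏ c_{λ_i}, extended linearly) to f · ∏_{i<j} (1 − u_i/u_j) equals applying the Δ-operation (u₁^{λ₁}···u_r^{λ_r} ↦ det(c_{λ_i + j − i})_{i,j}, extended linearly) to f. -/

import Mathlib

/-- Laurent polynomials in `r` variables. -/
abbrev LaurentMv (R : Type*) [CommRing R] (r : ℕ) := AddMonoidAlgebra R (Fin r → ℤ)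

/-- The monomial `u^v = ∏ u_i^{v i}`. -/
noncomputable def mono {R : Type*} [CommRing R] {r : ℕ} (v : Fin r → ℤ) :
    LaurentMv R r :=
  AddMonoidAlgebra.single v 1

section Aux
variable {R : Type*} [CommRing R] {r : ℕ}

lemma mono_mul (a b : Fin r → ℤ) : (mono a : LaurentMv R r) * mono b = mono (a + b) := by
  simp [mono, AddMonoidAlgebra.single_mul_single]

lemma mono_zero : (mono 0 : LaurentMv R r) = 1 := rfl

lemma prod_mono {ι : Type*} (s : Finset ι) (g : ι → (Fin r → ℤ)) :
    (∏ i ∈ s, (mono (g i) : LaurentMv R r)) = mono (∑ i ∈ s, g i) := by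
  classical
  simpa [mono] using (AddMonoidAlgebra.prod_single (s := s) (m := g) (r := fun _ => (1:R)))

lemma mono_pow (a : Fin r → ℤ) (n : ℕ) : (mono a : LaurentMv R r) ^ n = mono (n • a) := by
  induction n with
  | zero => simp [mono_zero]
  | succ n ih => rw [pow_succ, ih, mono_mul, succ_nsmul]

lemma prod_pairs {M : Type*} [CommMonoid M] (g : Fin r → Fin r → M) :
    (∏ p ∈ Finset.univ.filter (fun p : Fin r × Fin r => p.1 < p.2), g p.1 p.2)
      = ∏ i, ∏ j ∈ Finset.Ioi i, g i j := by
  rw [Finset.prod_filter, Fintype.prod_prod_type]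
  refine Finset.prod_congr rfl fun i _ => ?_
  rw [← Finset.prod_filter]
  congr 1
  ext j
  simp

end Aux

section Key
variable {R : Type*} [CommRing R] {r : ℕ}

lemma sum_neg_single : (∑ i : Fin r, ∑ j ∈ Finset.Ioi i, -(Pi.single j (1:ℤ)))
    = fun k : Fin r => -(k : ℤ) := by
  funext k
  simp only [Finset.sum_apply, Pi.neg_apply, Pi.single_apply]
  simp only [Finset.sum_ite_eq, Finset.mem_Ioi, Finset.sum_neg_distrib]
  have h : (Finset.univ.filter fun x : Fin r => x < k) = Finset.Iio k := by
    ext x; simp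
  rw [Finset.sum_ite, Finset.sum_const, Finset.sum_const, h, Fin.card_Iio]
  simp

lemma key : (∏ p ∈ Finset.univ.filter (fun p : Fin r × Fin r => p.1 < p.2),
      (1 - mono (Pi.single p.1 (1 : ℤ) - Pi.single p.2 (1 : ℤ))) : LaurentMv R r)
    = ∑ σ : Equiv.Perm (Fin r),
        (Equiv.Perm.sign σ : ℤ) • mono (fun i => (σ i : ℤ) - (i : ℤ)) := by
  classical
  refine (prod_pairs (g := fun i j => (1 - mono (Pi.single i (1:ℤ) - Pi.single j (1:ℤ)) : LaurentMv R r))).trans ?_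
  have step2 : ∀ i j : Fin r, (1 - mono (Pi.single i (1 : ℤ) - Pi.single j (1 : ℤ)) : LaurentMv R r)
      = mono (-(Pi.single j (1:ℤ))) * (mono (Pi.single j (1:ℤ)) - mono (Pi.single i (1:ℤ))) := by
    intro i j
    rw [mul_sub, mono_mul, mono_mul]
    congr 1
    · rw [← mono_zero]; congr 1; abel
    · congr 1; abel
  simp_rw [step2, Finset.prod_mul_distrib]
  have h1 : (∏ i : Fin r, ∏ j ∈ Finset.Ioi i, (mono (-(Pi.single j (1:ℤ))) : LaurentMv R r))
      = mono (fun k : Fin r => -(k : ℤ)) := by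
    simp_rw [prod_mono]
    rw [sum_neg_single]
  rw [h1]
  rw [← Matrix.det_vandermonde (v := fun i : Fin r => (mono (Pi.single i (1:ℤ)) : LaurentMv R r))]
  have h2 : (mono (fun k : Fin r => -(k:ℤ)) : LaurentMv R r)
      = ∏ i : Fin r, (mono (Pi.single i (-(i:ℤ))) : LaurentMv R r) := by
    rw [prod_mono]
    congr 1
    exact (Finset.univ_sum_single (fun k : Fin r => -(k:ℤ))).symm
  rw [h2, ← Matrix.det_mul_column]
  have h3 : (Matrix.of fun i j => (mono (Pi.single i (-(i:ℤ))) : LaurentMv R r)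
        * Matrix.vandermonde (fun i : Fin r => (mono (Pi.single i (1:ℤ)) : LaurentMv R r)) i j)
      = Matrix.of fun i j : Fin r => (mono (Pi.single i ((j:ℤ) - (i:ℤ))) : LaurentMv R r) := by
    ext i j : 1
    simp only [Matrix.of_apply, Matrix.vandermonde_apply]
    rw [mono_pow, mono_mul]
    refine congrArg (mono (R := R)) ?_
    funext k
    simp only [Pi.add_apply, Pi.smul_apply, Pi.single_apply, smul_eq_mul, mul_ite, mul_one, mul_zero]
    split <;> simp <;> ring
  rw [h3, ← Matrix.det_transpose, Matrix.det_apply]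
  refine Finset.sum_congr rfl fun σ _ => ?_
  rw [Units.smul_def]
  congr 1
  simp only [Matrix.transpose_apply, Matrix.of_apply]
  rw [prod_mono]
  congr 1
  exact Finset.univ_sum_single (fun i : Fin r => ((σ i : ℤ) - (i : ℤ)))

end Key

/-- The C-operation: `u^λ ↦ ∏ i, c (λ i)`, extended linearly. -/
noncomputable def Cop {R : Type*} [CommRing R] (c : ℤ → R) {r : ℕ}
    (f : LaurentMv R r) : R :=
  f.coeff.sum (fun v t => t * ∏ i, c (v i))

/-- The Δ-operation: `u^λ ↦ det (c (λ i + j - i))`, extended linearly. -/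
noncomputable def DeltaOp {R : Type*} [CommRing R] (c : ℤ → R) {r : ℕ}
    (f : LaurentMv R r) : R :=
  f.coeff.sum (fun v t => t * Matrix.det (fun i j : Fin r => c (v i + (j : ℤ) - (i : ℤ))))

section Ops
variable {R : Type*} [CommRing R] (c : ℤ → R) {r : ℕ}

lemma Cop_zero : Cop c (0 : LaurentMv R r) = 0 := Finsupp.sum_zero_index

lemma Cop_single (v : Fin r → ℤ) (t : R) :
    Cop c (AddMonoidAlgebra.single v t) = t * ∏ i, c (v i) :=
  Finsupp.sum_single_index (by simp)

lemma Cop_add (x y : LaurentMv R r) : Cop c (x + y) = Cop c x + Cop c y :=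
  Finsupp.sum_add_index' (by simp) (by intros; ring)

lemma Cop_zsmul (z : ℤ) (x : LaurentMv R r) : Cop c (z • x) = z • Cop c x := by
  unfold Cop
  rw [AddMonoidAlgebra.coeff_smul, Finsupp.sum_smul_index' (by simp), Finsupp.smul_sum]
  exact Finsupp.sum_congr fun v _ => smul_mul_assoc z _ _

lemma Cop_sum {ι : Type*} (s : Finset ι) (g : ι → LaurentMv R r) :
    Cop c (∑ i ∈ s, g i) = ∑ i ∈ s, Cop c (g i) := by
  classical
  induction s using Finset.induction with
  | empty => simp [Cop_zero]
  | insert _ _ h ih => rw [Finset.sum_insert h, Finset.sum_insert h, Cop_add, ih]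

lemma Cop_single_mul_mono (v d : Fin r → ℤ) (t : R) :
    Cop c ((show LaurentMv R r from AddMonoidAlgebra.single v t) * mono d) = t * ∏ i, c (v i + d i) := by
  have h : Cop c ((show LaurentMv R r from AddMonoidAlgebra.single v t) * mono d)
      = Cop c (AddMonoidAlgebra.single (v + d) t) := by
    congr 1
    simp [mono, AddMonoidAlgebra.single_mul_single]
  rw [h, Cop_single]
  simp

lemma DeltaOp_zero : DeltaOp c (0 : LaurentMv R r) = 0 := Finsupp.sum_zero_index

lemma DeltaOp_single (v : Fin r → ℤ) (t : R) :
    DeltaOp c (AddMonoidAlgebra.single v t)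
      = t * Matrix.det (Matrix.of fun i j : Fin r => c (v i + (j : ℤ) - (i : ℤ))) :=
  Finsupp.sum_single_index (by simp)

lemma DeltaOp_add (x y : LaurentMv R r) :
    DeltaOp c (x + y) = DeltaOp c x + DeltaOp c y :=
  Finsupp.sum_add_index' (by simp) (by intros; ring)

end Ops

/-- Lemma (C versus Δ): `C(f · ∏_{i<j} (1 - u_i/u_j)) = Δ(f)`. -/
theorem C_vs_Delta {R : Type*} [CommRing R] (c : ℤ → R)
    (hc0 : c 0 = 1) (hcneg : ∀ n : ℤ, n < 0 → c n = 0)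
    {r : ℕ} (f : LaurentMv R r) :
    Cop c (f * ∏ p ∈ Finset.univ.filter (fun p : Fin r × Fin r => p.1 < p.2),
        (1 - mono (Pi.single p.1 (1 : ℤ) - Pi.single p.2 (1 : ℤ)))) =
      DeltaOp c f := by
  classical
  rw [key]
  induction f using AddMonoidAlgebra.induction_linear with
  | zero => rw [zero_mul, Cop_zero, DeltaOp_zero]
  | add f g hf hg => rw [add_mul, Cop_add, hf, hg, DeltaOp_add]
  | single v t =>
    rw [Finset.mul_sum, Cop_sum, DeltaOp_single]
    rw [← Matrix.det_transpose, Matrix.det_apply, Finset.mul_sum]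
    refine Finset.sum_congr rfl fun σ _ => ?_
    rw [mul_smul_comm, Cop_zsmul, Cop_single_mul_mono, Units.smul_def, mul_smul_comm]
    congr 1
    refine congrArg (t * ·) ?_
    refine Finset.prod_congr rfl fun i _ => ?_
    simp only [Matrix.transpose_apply, Matrix.of_apply]
    ring_nf
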